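/- Let X be in M_n with ||X||_infty <= gamma and define tau = sup{k <= n : sum_{i=1}^k E[X_i^2 | F_{i-1}] <= s^2(X)} (with tau = 0 if the set is empty). Then, almost surely, sum_{i=1}^tau E[X_i^2 | F_{i-1}] >= min(s^2(X)*V^2(X), s^2(X) - gamma^2). -/

import Mathlib

open MeasureTheory ProbabilityTheory Real

/-!
Every increment `E[X_i² | F_{i-1}]` of the running conditional variance is at most `γ²` almost
surely. If `τ = n`, the running sum at `τ` is the full sum `s² V²`. Otherwise the sum up to `τ + 1`
already exceeds `s²`, and removing its last increment loses at most `γ²`.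
-/

theorem min_sum_Icc_sub_le_sum_Icc_sSup {α : Type*} [AddCommGroup α] [LinearOrder α]
    [IsOrderedAddMonoid α] {g : ℕ → α} {n : ℕ} {s c : α} (hs : 0 ≤ s)
    (hg : ∀ i ∈ Finset.Icc 1 n, g i ≤ c) :
    min (∑ i ∈ Finset.Icc 1 n, g i) (s - c) ≤
      ∑ i ∈ Finset.Icc 1 (sSup {k | k ≤ n ∧ ∑ i ∈ Finset.Icc 1 k, g i ≤ s}), g i := by
  set A := {k | k ≤ n ∧ ∑ i ∈ Finset.Icc 1 k, g i ≤ s}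
  have hbdd : BddAbove A := ⟨n, fun _ hk => hk.1⟩
  obtain ⟨hle, -⟩ : sSup A ∈ A := Nat.sSup_mem ⟨0, Nat.zero_le n, by simpa using hs⟩ hbdd
  rcases hle.eq_or_lt with heq | hlt
  · rw [heq]
    exact min_le_left _ _
  · have hexit : s < ∑ i ∈ Finset.Icc 1 (sSup A + 1), g i := by
      simpa [A, Nat.succ_le_of_lt hlt] using notMem_of_csSup_lt (Nat.lt_succ_self _) hbdd
    rw [Finset.sum_Icc_succ_top (by omega)] at hexit
    have hlast := hg _ (Finset.mem_Icc.2 ⟨by omega, hlt⟩)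
    exact min_le_of_right_le (sub_le_iff_le_add.2 (hexit.le.trans (by gcongr)))

theorem running_conditional_variance_at_tau_general
    {Ω : Type*} {mΩ : MeasurableSpace Ω} (μ : Measure Ω)
    (n : ℕ) (X : ℕ → Ω → ℝ) (ℱ : ℕ → MeasurableSpace Ω)
    (γ : ℝ) (hbound : ∀ i, 1 ≤ i → i ≤ n → ∀ᵐ ω ∂μ, |X i ω| ≤ γ)
    (s2 : ℝ) (hpos : 0 < s2)
    (τ : Ω → ℕ)
    (hτ : ∀ ω, τ ω = sSup {k : ℕ | k ≤ n ∧
        ∑ i ∈ Finset.Icc 1 k, (μ[fun ω' => (X i ω') ^ 2 | ℱ (i - 1)]) ω ≤ s2}) :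
    ∀ᵐ ω ∂μ,
      min (s2 * (s2⁻¹ * ∑ i ∈ Finset.Icc 1 n, (μ[fun ω' => (X i ω') ^ 2 | ℱ (i - 1)]) ω))
          (s2 - γ ^ 2)
        ≤ ∑ i ∈ Finset.Icc 1 (τ ω), (μ[fun ω' => (X i ω') ^ 2 | ℱ (i - 1)]) ω := by
  have hincrement : ∀ᵐ ω ∂μ, ∀ i ∈ Finset.Icc 1 n,
      (μ[fun ω' => (X i ω') ^ 2 | ℱ (i - 1)]) ω ≤ γ ^ 2 := by
    refine (ae_ball_iff (Finset.countable_toSet _)).2 fun i hi ↦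
      condExp_le_nonneg_const (sq_nonneg γ) ?_
    obtain ⟨hi1, hin⟩ := Finset.mem_Icc.1 hi
    filter_upwards [hbound i hi1 hin] with ω hω
    exact sq_le_sq' (abs_le.1 hω).1 (abs_le.1 hω).2
  filter_upwards [hincrement] with ω hω
  rw [mul_inv_cancel_left₀ hpos.ne', hτ ω]
  exact min_sum_Icc_sub_le_sum_Icc_sSup hpos.le hω

/-- Lower bound on the running conditional variance at the random time `τ`. -/
theorem running_conditional_variance_at_tau
    {Ω : Type*} {mΩ : MeasurableSpace Ω} (μ : Measure Ω) [IsProbabilityMeasure μ]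
    (n : ℕ) (hn : 1 ≤ n) (X : ℕ → Ω → ℝ) (ℱ : ℕ → MeasurableSpace Ω)
    (hmono : Monotone ℱ) (hle : ∀ i, ℱ i ≤ mΩ)
    (hadapted : ∀ i, 1 ≤ i → i ≤ n → Measurable[ℱ i] (X i))
    (hL2 : ∀ i, 1 ≤ i → i ≤ n → MemLp (X i) 2 μ)
    (hmds : ∀ i, 1 ≤ i → i ≤ n → μ[X i | ℱ (i - 1)] =ᵐ[μ] 0)
    (γ : ℝ) (hγ : 0 < γ) (hbound : ∀ i, 1 ≤ i → i ≤ n → ∀ᵐ ω ∂μ, |X i ω| ≤ γ)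
    (s2 : ℝ) (hs2 : s2 = ∑ i ∈ Finset.Icc 1 n, ∫ ω, (X i ω) ^ 2 ∂μ) (hpos : 0 < s2)
    (τ : Ω → ℕ)
    (hτ : ∀ ω, τ ω = sSup {k : ℕ | k ≤ n ∧
        ∑ i ∈ Finset.Icc 1 k, (μ[fun ω' => (X i ω') ^ 2 | ℱ (i - 1)]) ω ≤ s2}) :
    ∀ᵐ ω ∂μ,
      min (s2 * (s2⁻¹ * ∑ i ∈ Finset.Icc 1 n, (μ[fun ω' => (X i ω') ^ 2 | ℱ (i - 1)]) ω))
          (s2 - γ ^ 2)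
        ≤ ∑ i ∈ Finset.Icc 1 (τ ω), (μ[fun ω' => (X i ω') ^ 2 | ℱ (i - 1)]) ω :=
  running_conditional_variance_at_tau_general (mΩ := mΩ) μ n X ℱ γ hbound s2 hpos τ hτ
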